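/- arXiv:2403.03197 — 3 statements merged into one kernel-verified Lean document; each statement's English description precedes it below -/
import Mathlib

section
/- Let n, h, k ≥ 1 be integers, d = (0,−1,1) and e = (1,0,0). Let {(r^(i,j), t^(i,j), ℓ^(i,j), b^(i,j))}_{1≤i≤h, 1≤j≤k} be a family of tiles in 𝒞_n forming a valid tiling of an h × k rectangle, i.e., r^(i,j) = ℓ^(i+1,j) for all 1 ≤ i ≤ h−1, 1 ≤ j ≤ k, and t^(i,j) = b^(i,j+1) for all 1 ≤ i ≤ h, 1 ≤ j ≤ k−1. Set R = (1/k)·Σ_{j=1}^{k} r^(h,j), T = (1/h)·Σ_{i=1}^{h} t^(i,k), L = (1/k)·Σ_{j=1}^{k} ℓ^(1,j), B = (1/h)·Σ_{i=1}^{h} b^(i,1) in ℚ³. Then (1/k)·⟨(1/n)d, T − B⟩ − ⟨e, L⟩ = (1/h)·⟨(1/n)d, R − L⟩ − ⟨e, B⟩. -/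
open scoped BigOperators

namespace MetallicMean

/-- A 3-dimensional integer vector. -/
abbrev Vec3 := ℤ × ℤ × ℤ

/-- A Wang tile is a quadruple (right, top, left, bottom) of labels. -/
abbrev Tile := Vec3 × Vec3 × Vec3 × Vec3

def right (τ : Tile) : Vec3 := τ.1
def top (τ : Tile) : Vec3 := τ.2.1
def left (τ : Tile) : Vec3 := τ.2.2.1
def bottom (τ : Tile) : Vec3 := τ.2.2.2

/-- Reflection of a tile by the positive diagonal: (r,t,ℓ,b) ↦ (t,r,b,ℓ). -/
def reflect (τ : Tile) : Tile := (top τ, right τ, bottom τ, left τ)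

/-- The set V_n of admissible labels. -/
def Vset (n : ℤ) : Set Vec3 :=
  {v | 0 ≤ v.1 ∧ v.1 ≤ v.2.1 ∧ v.2.1 ≤ v.2.2 ∧ v.2.2 ≤ n + 1 ∧ v.2.1 ≤ 1}

/-- The function θ_n. -/
def theta (n : ℤ) (u v : Vec3) : Vec3 :=
  (u.1,
   if u.1 = 0 then v.2.2 - n else 1,
   if v.1 = 0 then v.2.1 + u.1 else u.2.2 + 1)

/-- The set 𝒞_n of instances of the θ_n-chip. -/
def Cset (n : ℤ) : Set Tile :=
  {τ | ∃ u v : Vec3, u ∈ Vset n ∧ v ∈ Vset n ∧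
      theta n u v ∈ Vset n ∧ theta n v u ∈ Vset n ∧
      τ = (theta n u v, theta n v u, u, v)}

/-- The n-th metallic mean β, the positive root of x² - nx - 1. -/
noncomputable def beta (n : ℤ) : ℝ := ((n : ℝ) + Real.sqrt ((n : ℝ) ^ 2 + 4)) / 2

/-- The conjugate root β* = n - β = -β⁻¹. -/
noncomputable def betaStar (n : ℤ) : ℝ := (n : ℝ) - beta n

/-- The coding map Λ_n. -/
noncomputable def Lam (n : ℤ) (x y : ℝ) : Vec3 :=
  (⌊y + betaStar n + 1⌋,
   ⌊(beta n)⁻¹ * x + y + betaStar n + 1⌋,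
   ⌊beta n * x + y + betaStar n + 1⌋)

/-- The Wang tile TILE_n(x, y), written as (right, top, left, bottom). -/
noncomputable def TileAt (n : ℤ) (x y : ℝ) : Tile :=
  (Lam n (Int.fract x) (Int.fract y),
   Lam n (Int.fract y) (Int.fract x),
   Lam n (Int.fract (x + betaStar n)) (Int.fract y),
   Lam n (Int.fract (y + betaStar n)) (Int.fract x))

/-- The metallic mean Wang tile set 𝒯_n = {TILE_n(x,y) : (x,y) ∈ [0,1]²}. -/
def Tset (n : ℤ) : Set Tile :=
  {τ | ∃ x y : ℝ, x ∈ Set.Icc (0 : ℝ) 1 ∧ y ∈ Set.Icc (0 : ℝ) 1 ∧ τ = TileAt n x y}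

/-- A configuration assigns a tile to every position of ℤ². -/
abbrev Config := ℤ × ℤ → Tile

/-- A configuration is valid w.r.t. a set `S` of Wang tiles if all its tiles are in `S`
and contiguous edges of adjacent tiles match. -/
def IsValid (S : Set Tile) (w : Config) : Prop :=
  (∀ p : ℤ × ℤ, w p ∈ S) ∧
  ∀ p : ℤ × ℤ,
    right (w p) = left (w (p + (1, 0))) ∧
    top (w p) = bottom (w (p + (0, 1)))

/-- The Wang shift Ω_S of all valid configurations over `S`. -/
def OmegaOf (S : Set Tile) : Set Config := {w | IsValid S w}

/-- The shift ℤ²-action on configurations: (σ^k w)(p) = w(p + k). -/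
def shift (k : ℤ × ℤ) (w : Config) : Config := fun p => w (p + k)

end MetallicMean

namespace MetallicMean

/-- Rational 3-dimensional vectors. -/
abbrev Vec3Q := ℚ × ℚ × ℚ

/-- Cast an integer vector to a rational vector. -/
def toQ (v : Vec3) : Vec3Q := ((v.1 : ℚ), (v.2.1 : ℚ), (v.2.2 : ℚ))

/-- The canonical inner product on ℚ³. -/
def dotQ (a b : Vec3Q) : ℚ := a.1 * b.1 + a.2.1 * b.2.1 + a.2.2 * b.2.2

/-- The vector d = (0, -1, 1). -/
def dQ : Vec3Q := (0, -1, 1)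

/-- The vector e = (1, 0, 0). -/
def eQ : Vec3Q := (1, 0, 0)

end MetallicMean

namespace MetallicMean

/-!
Every tile `(r, t, ℓ, b)` of `𝒞_n` satisfies the local balance
`⟨d, t - b⟩ / n - ℓ₀ = ⟨d, r - ℓ⟩ / n - b₀` (a four-case check on `u₀, v₀ ∈ {0, 1}`), and `θ_n`
keeps the first coordinate, so `ℓ₀` is constant along rows and `b₀` along columns. Summing the
balance over the rectangle, `⟨d, t - b⟩` telescopes along columns and `⟨d, r - ℓ⟩` along rows,
which leaves exactly the boundary averages once divided by `h k`.
-/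

open Finset

lemma dotQ_sub (a x y : Vec3Q) : dotQ a (x - y) = dotQ a x - dotQ a y := by
  simp only [dotQ, Prod.fst_sub, Prod.snd_sub]; ring

lemma dotQ_smul (c : ℚ) (a x : Vec3Q) : dotQ a (c • x) = c * dotQ a x := by
  simp only [dotQ, Prod.smul_fst, Prod.smul_snd, smul_eq_mul]; ring

lemma dotQ_sum {ι : Type*} (a : Vec3Q) (s : Finset ι) (f : ι → Vec3Q) :
    dotQ a (∑ i ∈ s, f i) = ∑ i ∈ s, dotQ a (f i) := by
  simp only [dotQ, Prod.fst_sum, Prod.snd_sum, mul_sum, ← sum_add_distrib]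

lemma Int.sum_Icc_sub_telescope {M : Type*} [AddCommGroup M] (F G : ℤ → M) {k : ℤ} (hk : 1 ≤ k)
    (hFG : ∀ j, 1 ≤ j → j ≤ k - 1 → F j = G (j + 1)) :
    ∑ j ∈ Icc 1 k, (F j - G j) = F k - G 1 := by
  induction k, hk using Int.leInduction with
  | base => simp
  | succ k hk ih =>
    rw [← Order.succ_eq_add_one, ← insert_Icc_right_eq_Icc_succ (by simp; omega),
      sum_insert (by simp), Order.succ_eq_add_one,
      ih fun j hj₁ hj₂ => hFG j hj₁ (by omega), hFG k hk (by omega)]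
    abel

lemma Int.eq_of_succ_eq {α : Type*} (f : ℤ → α) {h : ℤ}
    (hf : ∀ i, 1 ≤ i → i ≤ h - 1 → f (i + 1) = f i) :
    ∀ i, 1 ≤ i → i ≤ h → f i = f 1 := by
  intro i hi
  induction i, hi using Int.leInduction with
  | base => intro _; rfl
  | succ i hi ih => intro hih; rw [hf i hi (by omega), ih (by omega)]

lemma Int.sum_Icc_const_smul {M : Type*} [AddCommGroup M] {h : ℤ} (hh : 0 ≤ h) (x : M) :
    ∑ _i ∈ Icc (1 : ℤ) h, x = h • x := by
  rw [sum_const, Int.card_Icc, add_sub_cancel_right, ← natCast_zsmul, Int.toNat_of_nonneg hh]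

lemma dotQ_eQ_toQ (w : Vec3) : dotQ eQ (toQ w) = w.1 := by
  simp [dotQ, eQ, toQ]

lemma Cset.fst_right_eq_fst_left {n : ℤ} {τ : Tile} (hτ : τ ∈ Cset n) :
    (right τ).1 = (left τ).1 := by
  obtain ⟨u, v, -, -, -, -, rfl⟩ := hτ
  rfl

lemma Cset.fst_top_eq_fst_bottom {n : ℤ} {τ : Tile} (hτ : τ ∈ Cset n) :
    (top τ).1 = (bottom τ).1 := by
  obtain ⟨u, v, -, -, -, -, rfl⟩ := hτ
  rfl

lemma Cset.balance {n : ℤ} {τ : Tile} (hτ : τ ∈ Cset n) :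
    ((top τ).2.2 - (top τ).2.1) - ((bottom τ).2.2 - (bottom τ).2.1) - n * (left τ).1 =
      ((right τ).2.2 - (right τ).2.1) - ((left τ).2.2 - (left τ).2.1) - n * (bottom τ).1 := by
  obtain ⟨⟨u₀, u₁, u₂⟩, ⟨v₀, v₁, v₂⟩, hu, hv, -, -, rfl⟩ := hτ
  simp only [Vset, Set.mem_ofPred_eq] at hu hv
  obtain rfl | ⟨rfl, rfl⟩ : u₀ = 0 ∨ u₀ = 1 ∧ u₁ = 1 := by omega
  all_goals obtain rfl | ⟨rfl, rfl⟩ : v₀ = 0 ∨ v₀ = 1 ∧ v₁ = 1 := by omega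
  all_goals simp only [right, top, left, bottom, theta]; norm_num
  all_goals ring

lemma Cset.dotQ_balance {n : ℤ} (hn : (n : ℚ) ≠ 0) {τ : Tile} (hτ : τ ∈ Cset n) :
    dotQ ((1 / (n : ℚ)) • dQ) (toQ (top τ)) - dotQ ((1 / (n : ℚ)) • dQ) (toQ (bottom τ)) -
        (left τ).1 =
      dotQ ((1 / (n : ℚ)) • dQ) (toQ (right τ)) - dotQ ((1 / (n : ℚ)) • dQ) (toQ (left τ)) -
        (bottom τ).1 := by
  have h := congrArg (Int.cast : ℤ → ℚ) (Cset.balance hτ)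
  push_cast at h
  simp only [dotQ, dQ, toQ, Prod.smul_mk, smul_eq_mul]
  field_simp
  linear_combination h

section Rectangle

variable {M : Type*} [AddCommGroup M] (φ ψ : Vec3 → M) (tile : ℤ → ℤ → Tile) {h k : ℤ}

lemma sum_rect_top_sub_bottom_sub_left (hh : 0 ≤ h) (hk : 1 ≤ k)
    (hψ : ∀ i j, 1 ≤ i → i ≤ h → 1 ≤ j → j ≤ k → ψ (right (tile i j)) = ψ (left (tile i j)))
    (hhoriz : ∀ i j, 1 ≤ i → i ≤ h - 1 → 1 ≤ j → j ≤ k →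
      right (tile i j) = left (tile (i + 1) j))
    (hvert : ∀ i j, 1 ≤ i → i ≤ h → 1 ≤ j → j ≤ k - 1 →
      top (tile i j) = bottom (tile i (j + 1))) :
    ∑ i ∈ Icc 1 h, ∑ j ∈ Icc 1 k,
        (φ (top (tile i j)) - φ (bottom (tile i j)) - ψ (left (tile i j))) =
      ∑ i ∈ Icc 1 h, (φ (top (tile i k)) - φ (bottom (tile i 1))) -
        h • ∑ j ∈ Icc 1 k, ψ (left (tile 1 j)) := by
  have hcol : ∀ i ∈ Icc 1 h, ∑ j ∈ Icc 1 k, (φ (top (tile i j)) - φ (bottom (tile i j))) =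
      φ (top (tile i k)) - φ (bottom (tile i 1)) := fun i hi ↦ by
    rw [mem_Icc] at hi
    exact Int.sum_Icc_sub_telescope _ _ hk fun j hj₁ hj₂ ↦ by rw [hvert i j hi.1 hi.2 hj₁ hj₂]
  have hrow : ∀ i ∈ Icc 1 h, ∀ j ∈ Icc 1 k, ψ (left (tile i j)) = ψ (left (tile 1 j)) :=
    fun i hi j hj ↦ by
    rw [mem_Icc] at hi hj
    refine Int.eq_of_succ_eq (fun i ↦ ψ (left (tile i j))) (fun i hi₁ hi₂ ↦ ?_) i hi.1 hi.2
    rw [← hhoriz i j hi₁ hi₂ hj.1 hj.2, hψ i j hi₁ (by omega) hj.1 hj.2]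
  rw [sum_congr rfl fun i hi ↦ by rw [sum_sub_distrib, hcol i hi, sum_congr rfl (hrow i hi)],
    sum_sub_distrib, Int.sum_Icc_const_smul hh]

lemma sum_rect_boundary_balance (hh : 1 ≤ h) (hk : 1 ≤ k)
    (hbal : ∀ i j, 1 ≤ i → i ≤ h → 1 ≤ j → j ≤ k →
      φ (top (tile i j)) - φ (bottom (tile i j)) - ψ (left (tile i j)) =
        φ (right (tile i j)) - φ (left (tile i j)) - ψ (bottom (tile i j)))
    (hψh : ∀ i j, 1 ≤ i → i ≤ h → 1 ≤ j → j ≤ k → ψ (right (tile i j)) = ψ (left (tile i j)))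
    (hψv : ∀ i j, 1 ≤ i → i ≤ h → 1 ≤ j → j ≤ k → ψ (top (tile i j)) = ψ (bottom (tile i j)))
    (hhoriz : ∀ i j, 1 ≤ i → i ≤ h - 1 → 1 ≤ j → j ≤ k →
      right (tile i j) = left (tile (i + 1) j))
    (hvert : ∀ i j, 1 ≤ i → i ≤ h → 1 ≤ j → j ≤ k - 1 →
      top (tile i j) = bottom (tile i (j + 1))) :
    ∑ i ∈ Icc 1 h, (φ (top (tile i k)) - φ (bottom (tile i 1))) -
        h • ∑ j ∈ Icc 1 k, ψ (left (tile 1 j)) =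
      ∑ j ∈ Icc 1 k, (φ (right (tile h j)) - φ (left (tile 1 j))) -
        k • ∑ i ∈ Icc 1 h, ψ (bottom (tile i 1)) := calc
  _ = ∑ i ∈ Icc 1 h, ∑ j ∈ Icc 1 k,
        (φ (top (tile i j)) - φ (bottom (tile i j)) - ψ (left (tile i j))) :=
    (sum_rect_top_sub_bottom_sub_left φ ψ tile (by omega) hk hψh hhoriz hvert).symm
  _ = ∑ j ∈ Icc 1 k, ∑ i ∈ Icc 1 h,
        (φ (right (tile i j)) - φ (left (tile i j)) - ψ (bottom (tile i j))) := by
    rw [sum_comm]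
    refine sum_congr rfl fun j hj ↦ sum_congr rfl fun i hi ↦ ?_
    rw [mem_Icc] at hi hj
    exact hbal i j hi.1 hi.2 hj.1 hj.2
  -- the row sums of the tiling are the column sums of its reflection in the diagonal
  _ = _ := sum_rect_top_sub_bottom_sub_left φ ψ (fun j i ↦ reflect (tile i j)) (by omega) hh
    (fun j i hj₁ hj₂ hi₁ hi₂ ↦ hψv i j hi₁ hi₂ hj₁ hj₂)
    (fun j i hj₁ hj₂ hi₁ hi₂ ↦ hvert i j hi₁ hi₂ hj₁ hj₂)
    (fun j i hj₁ hj₂ hi₁ hi₂ ↦ hhoriz i j hi₁ hi₂ hj₁ hj₂)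

end Rectangle

/-- Equation satisfied by a valid h × k rectangular tiling by tiles of 𝒞_n:
(1/k)·⟨(1/n)d, T - B⟩ - ⟨e, L⟩ = (1/h)·⟨(1/n)d, R - L⟩ - ⟨e, B⟩, where R, T, L, B are the
averages of the right, top, left and bottom labels on the boundary of the rectangle. -/
theorem statement5 (n h k : ℤ) (hn : 1 ≤ n) (hh : 1 ≤ h) (hk : 1 ≤ k)
    (tile : ℤ → ℤ → Tile)
    (htile : ∀ i j : ℤ, 1 ≤ i → i ≤ h → 1 ≤ j → j ≤ k → tile i j ∈ Cset n)
    (hhoriz : ∀ i j : ℤ, 1 ≤ i → i ≤ h - 1 → 1 ≤ j → j ≤ k →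
      right (tile i j) = left (tile (i + 1) j))
    (hvert : ∀ i j : ℤ, 1 ≤ i → i ≤ h → 1 ≤ j → j ≤ k - 1 →
      top (tile i j) = bottom (tile i (j + 1))) :
    (1 / (k : ℚ)) * dotQ ((1 / (n : ℚ)) • dQ)
        (((1 / (h : ℚ)) • ∑ i ∈ Finset.Icc 1 h, toQ (top (tile i k))) -
          ((1 / (h : ℚ)) • ∑ i ∈ Finset.Icc 1 h, toQ (bottom (tile i 1)))) -
      dotQ eQ ((1 / (k : ℚ)) • ∑ j ∈ Finset.Icc 1 k, toQ (left (tile 1 j))) =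
    (1 / (h : ℚ)) * dotQ ((1 / (n : ℚ)) • dQ)
        (((1 / (k : ℚ)) • ∑ j ∈ Finset.Icc 1 k, toQ (right (tile h j))) -
          ((1 / (k : ℚ)) • ∑ j ∈ Finset.Icc 1 k, toQ (left (tile 1 j)))) -
      dotQ eQ ((1 / (h : ℚ)) • ∑ i ∈ Finset.Icc 1 h, toQ (bottom (tile i 1))) := by
  have hn₀ : (n : ℚ) ≠ 0 := by exact_mod_cast (by omega : n ≠ 0)
  have hh₀ : (h : ℚ) ≠ 0 := by exact_mod_cast (by omega : h ≠ 0)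
  have hk₀ : (k : ℚ) ≠ 0 := by exact_mod_cast (by omega : k ≠ 0)
  have key := sum_rect_boundary_balance (fun w ↦ dotQ ((1 / (n : ℚ)) • dQ) (toQ w))
    (fun w ↦ (w.1 : ℚ)) tile hh hk
    (fun i j hi₁ hi₂ hj₁ hj₂ ↦ Cset.dotQ_balance hn₀ (htile i j hi₁ hi₂ hj₁ hj₂))
    (fun i j hi₁ hi₂ hj₁ hj₂ ↦ by
      rw [Cset.fst_right_eq_fst_left (htile i j hi₁ hi₂ hj₁ hj₂)])
    (fun i j hi₁ hi₂ hj₁ hj₂ ↦ by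
      rw [Cset.fst_top_eq_fst_bottom (htile i j hi₁ hi₂ hj₁ hj₂)])
    hhoriz hvert
  simp only [sum_sub_distrib, zsmul_eq_mul] at key
  simp only [dotQ_sub, dotQ_smul, dotQ_sum, dotQ_eQ_toQ]
  field_simp
  linear_combination key

end MetallicMean
end

section
/- For every integer n ≥ 1 and every (x,y) ∈ ℝ²: (i) the reflection of TILE_n(x,y) under (r,t,ℓ,b) ↦ (t,r,b,ℓ) equals TILE_n(y,x); (ii) all four labels of TILE_n(x,y) lie in V_n; (iii) TILE_n(x,y) ∈ 𝒞_n, i.e., its right label equals θ_n applied to its (left, bottom) labels and its top label equals θ_n applied to its (bottom, left) labels. -/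
open scoped BigOperators

namespace MetallicMean

/-!
Write `c = β⁻¹`; then `βc = 1`, `β - c = n`, `0 < c ≤ 1` and `β* = -c`, so for `x, y ∈ [0, 1)`
the labels of `Λ_n(x, y)` are `⌊y + 1 - c⌋ ∈ {0, 1}`, `⌊cx + y + 1 - c⌋` and `⌊βx + y + 1 - c⌋`,
and `{x + β*}` is `x - c + 1` or `x - c` according as `x < c` or not. In each of the four cases
`x < c` or not, `y < c` or not, the two floors that `θ_n` must match become, after these
identities, `⌊u + k⌋` and `⌊cu + k⌋` with `k ∈ ℤ` and `u ∈ [-1, 1)`; they agree because `u` and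
`cu` have the same sign. The reflection identity holds by definition.
-/

theorem beta_pos (n : ℤ) : 0 < beta n := by
  have h : |(n : ℝ)| < Real.sqrt ((n : ℝ) ^ 2 + 4) := by
    rw [← Real.sqrt_sq_eq_abs]
    exact Real.sqrt_lt_sqrt (sq_nonneg _) (by linarith)
  unfold beta
  linarith [neg_abs_le (n : ℝ)]

theorem beta_sq (n : ℤ) : beta n ^ 2 = n * beta n + 1 := by
  have h := Real.sq_sqrt (show (0 : ℝ) ≤ (n : ℝ) ^ 2 + 4 by positivity)
  unfold beta
  linear_combination h / 4

theorem beta_sub_inv (n : ℤ) : beta n - (beta n)⁻¹ = n := by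
  have h := beta_pos n
  field_simp
  linear_combination beta_sq n

theorem betaStar_eq (n : ℤ) : betaStar n = -(beta n)⁻¹ := by
  rw [betaStar, ← beta_sub_inv n]
  ring

theorem one_le_beta {n : ℤ} (hn : 0 ≤ n) : 1 ≤ beta n := by
  have hn' : (0 : ℝ) ≤ n := by exact_mod_cast hn
  have h : 2 ≤ Real.sqrt ((n : ℝ) ^ 2 + 4) := Real.le_sqrt_of_sq_le (by nlinarith)
  unfold beta
  linarith

theorem inv_beta_le_one {n : ℤ} (hn : 0 ≤ n) : (beta n)⁻¹ ≤ 1 :=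
  inv_le_one_of_one_le₀ (one_le_beta hn)

theorem floor_mul_eq_floor {c u : ℝ} (hc0 : 0 < c) (hc1 : c ≤ 1) (hu0 : -1 ≤ u)
    (hu1 : u < 1) : ⌊c * u⌋ = ⌊u⌋ := by
  rcases lt_or_ge u 0 with hu | hu
  · have hfl : ∀ v : ℝ, -1 ≤ v → v < 0 → ⌊v⌋ = -1 := fun v h₁ h₂ =>
      Int.floor_eq_iff.mpr ⟨by push_cast; linarith, by push_cast; linarith⟩
    rw [hfl u hu0 hu, hfl _ (by nlinarith) (by nlinarith)]
  · rw [Int.floor_eq_zero_iff.mpr ⟨hu, hu1⟩,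
      Int.floor_eq_zero_iff.mpr ⟨by positivity, by nlinarith⟩]

theorem floor_mul_add_intCast {c u : ℝ} (hc0 : 0 < c) (hc1 : c ≤ 1) (hu0 : -1 ≤ u)
    (hu1 : u < 1) (k : ℤ) : ⌊c * u + k⌋ = ⌊u + k⌋ := by
  rw [Int.floor_add_intCast, Int.floor_add_intCast, floor_mul_eq_floor hc0 hc1 hu0 hu1]

theorem fract_fract_add (t a : ℝ) : Int.fract (Int.fract t + a) = Int.fract (t + a) := by
  rw [← Int.self_sub_floor t, sub_add_eq_add_sub, Int.fract_sub_intCast]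

theorem fract_add_neg_of_lt {y c : ℝ} (hy : 0 ≤ y) (hyc : y < c) (hc : c ≤ 1) :
    Int.fract (y + -c) = y + -c + 1 := by
  rw [← Int.fract_add_one, Int.fract_eq_self]
  constructor <;> linarith

theorem fract_add_neg_of_le {y c : ℝ} (hc : 0 ≤ c) (hcy : c ≤ y) (hy : y < 1) :
    Int.fract (y + -c) = y + -c :=
  Int.fract_eq_self.mpr ⟨by linarith, by linarith⟩

section Lam

variable {n : ℤ} {x y : ℝ}

theorem Lam_fst_of_lt (hn : 0 ≤ n) (hy0 : 0 ≤ y) (hyc : y < (beta n)⁻¹) :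
    (Lam n x y).1 = 0 := by
  rw [Lam, betaStar_eq, Int.floor_eq_zero_iff]
  constructor <;> linarith [inv_beta_le_one hn]

theorem Lam_fst_of_le (hcy : (beta n)⁻¹ ≤ y) (hy1 : y < 1) : (Lam n x y).1 = 1 := by
  rw [Lam, betaStar_eq, Int.floor_eq_iff]
  push_cast
  constructor <;> linarith [inv_pos.mpr (beta_pos n)]

theorem Lam_snd_of_le (hx0 : 0 ≤ x) (hx1 : x < 1) (hcy : (beta n)⁻¹ ≤ y) (hy1 : y < 1) :
    (Lam n x y).2.1 = 1 := by
  have hc0 := inv_pos.mpr (beta_pos n)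
  rw [Lam, betaStar_eq, Int.floor_eq_iff]
  push_cast
  constructor <;> nlinarith

theorem Lam_snd_of_lt (hn : 0 ≤ n) (hx0 : 0 ≤ x) (hx1 : x < 1) (hy0 : 0 ≤ y)
    (hyc : y < (beta n)⁻¹) :
    (Lam n x y).2.1 = (Lam n (Int.fract (y + betaStar n)) x).2.2 - n := by
  have hb := beta_pos n
  have hbc : beta n * (beta n)⁻¹ = 1 := mul_inv_cancel₀ hb.ne'
  have hc1 := inv_beta_le_one hn
  simp only [Lam, betaStar_eq]
  rw [fract_add_neg_of_lt hy0 hyc hc1, eq_sub_iff_add_eq]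
  have hby : beta n * y < 1 := by nlinarith
  calc ⌊(beta n)⁻¹ * x + y + -(beta n)⁻¹ + 1⌋ + n
      = ⌊(beta n)⁻¹ * (beta n * y + x - 1) + (1 : ℤ)⌋ + n := by
        congr 2; push_cast; linear_combination (-y) * hbc
    _ = ⌊(beta n * y + x - 1) + (1 : ℤ)⌋ + n := by
        rw [floor_mul_add_intCast (inv_pos.mpr hb) hc1 (by nlinarith) (by linarith)]
    _ = ⌊beta n * (y + -(beta n)⁻¹ + 1) + x + -(beta n)⁻¹ + 1⌋ := by
        rw [← Int.floor_add_intCast]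
        congr 1; push_cast; linear_combination hbc - beta_sub_inv n

theorem Lam_thd_of_le (hcx : (beta n)⁻¹ ≤ x) (hx1 : x < 1) :
    (Lam n x y).2.2 = (Lam n (Int.fract (x + betaStar n)) y).2.2 + 1 := by
  have hbc : beta n * (beta n)⁻¹ = 1 := mul_inv_cancel₀ (beta_pos n).ne'
  simp only [Lam, betaStar_eq]
  rw [fract_add_neg_of_le (inv_pos.mpr (beta_pos n)).le hcx hx1, ← Int.floor_add_one]
  congr 1
  linear_combination hbc

theorem Lam_thd_of_lt_of_lt (hn : 0 ≤ n) (hx0 : 0 ≤ x) (hxc : x < (beta n)⁻¹) (hy0 : 0 ≤ y)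
    (hyc : y < (beta n)⁻¹) :
    (Lam n x y).2.2 = (Lam n (Int.fract (y + betaStar n)) x).2.1 := by
  have hb := beta_pos n
  have hbc : beta n * (beta n)⁻¹ = 1 := mul_inv_cancel₀ hb.ne'
  have hc1 := inv_beta_le_one hn
  simp only [Lam, betaStar_eq]
  rw [fract_add_neg_of_lt hy0 hyc hc1]
  have hbx : beta n * x < 1 := by nlinarith
  calc ⌊beta n * x + y + -(beta n)⁻¹ + 1⌋
      = ⌊(beta n * x + y - (beta n)⁻¹) + (1 : ℤ)⌋ := by push_cast; ring_nf
    _ = ⌊(beta n)⁻¹ * (beta n * x + y - (beta n)⁻¹) + (1 : ℤ)⌋ := by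
        rw [floor_mul_add_intCast (inv_pos.mpr hb) hc1 (by nlinarith) (by linarith)]
    _ = ⌊(beta n)⁻¹ * (y + -(beta n)⁻¹ + 1) + x + -(beta n)⁻¹ + 1⌋ := by
        congr 1; push_cast; linear_combination x * hbc

theorem Lam_thd_of_lt_of_le (hn : 0 ≤ n) (hx0 : 0 ≤ x) (hxc : x < (beta n)⁻¹)
    (hcy : (beta n)⁻¹ ≤ y) (hy1 : y < 1) :
    (Lam n x y).2.2 = (Lam n (Int.fract (y + betaStar n)) x).2.1 + 1 := by
  have hb := beta_pos n
  have hbc : beta n * (beta n)⁻¹ = 1 := mul_inv_cancel₀ hb.ne'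
  have hc1 := inv_beta_le_one hn
  simp only [Lam, betaStar_eq]
  rw [fract_add_neg_of_le (inv_pos.mpr hb).le hcy hy1, ← Int.floor_add_one]
  have hbx : beta n * x < 1 := by nlinarith
  calc ⌊beta n * x + y + -(beta n)⁻¹ + 1⌋
      = ⌊(beta n * x + y - (beta n)⁻¹ - 1) + (2 : ℤ)⌋ := by push_cast; ring_nf
    _ = ⌊(beta n)⁻¹ * (beta n * x + y - (beta n)⁻¹ - 1) + (2 : ℤ)⌋ := by
        rw [floor_mul_add_intCast (inv_pos.mpr hb) hc1 (by nlinarith) (by linarith)]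
    _ = ⌊(beta n)⁻¹ * (y + -(beta n)⁻¹) + x + -(beta n)⁻¹ + 1 + 1⌋ := by
        congr 1; push_cast; linear_combination x * hbc

theorem Lam_mem_Vset (hn : 0 ≤ n) (hx0 : 0 ≤ x) (hx1 : x < 1) (hy0 : 0 ≤ y)
    (hy1 : y < 1) : Lam n x y ∈ Vset n := by
  have hc0 := inv_pos.mpr (beta_pos n)
  have hc1 := inv_beta_le_one hn
  have hsub := beta_sub_inv n
  have hn' : (0 : ℝ) ≤ n := by exact_mod_cast hn
  simp only [Lam, betaStar_eq]
  refine ⟨Int.floor_nonneg.mpr (by linarith), Int.floor_le_floor (by nlinarith),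
    Int.floor_le_floor (by nlinarith), Int.floor_le_iff.mpr ?_, Int.floor_le_iff.mpr ?_⟩
  · push_cast; nlinarith
  · push_cast; nlinarith

theorem Lam_eq_theta (hn : 0 ≤ n) (hx0 : 0 ≤ x) (hx1 : x < 1) (hy0 : 0 ≤ y)
    (hy1 : y < 1) :
    Lam n x y = theta n (Lam n (Int.fract (x + betaStar n)) y)
      (Lam n (Int.fract (y + betaStar n)) x) := by
  refine Prod.ext rfl (Prod.ext ?_ ?_) <;> dsimp only [theta]
  · rcases lt_or_ge y (beta n)⁻¹ with hyc | hcy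
    · rw [if_pos (Lam_fst_of_lt hn hy0 hyc), Lam_snd_of_lt hn hx0 hx1 hy0 hyc]
    · rw [if_neg (by rw [Lam_fst_of_le hcy hy1]; exact one_ne_zero),
        Lam_snd_of_le hx0 hx1 hcy hy1]
  · rcases lt_or_ge x (beta n)⁻¹ with hxc | hcx
    · rw [if_pos (Lam_fst_of_lt hn hx0 hxc)]
      rcases lt_or_ge y (beta n)⁻¹ with hyc | hcy
      · rw [Lam_fst_of_lt hn hy0 hyc, add_zero, Lam_thd_of_lt_of_lt hn hx0 hxc hy0 hyc]
      · rw [Lam_fst_of_le hcy hy1, Lam_thd_of_lt_of_le hn hx0 hxc hcy hy1]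
    · rw [if_neg (by rw [Lam_fst_of_le hcx hx1]; exact one_ne_zero), Lam_thd_of_le hcx hx1]

end Lam

/-- For every (x,y) ∈ ℝ²: (i) the reflection of TILE_n(x,y) is TILE_n(y,x);
(ii) all four labels of TILE_n(x,y) lie in V_n; (iii) TILE_n(x,y) ∈ 𝒞_n. -/
theorem statement9 (n : ℤ) (hn : 1 ≤ n) (x y : ℝ) :
    reflect (TileAt n x y) = TileAt n y x ∧
    (right (TileAt n x y) ∈ Vset n ∧ top (TileAt n x y) ∈ Vset n ∧
      left (TileAt n x y) ∈ Vset n ∧ bottom (TileAt n x y) ∈ Vset n) ∧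
    TileAt n x y ∈ Cset n := by
  have hn0 : 0 ≤ n := zero_le_one.trans hn
  have hmem (a c : ℝ) : Lam n (Int.fract a) (Int.fract c) ∈ Vset n :=
    Lam_mem_Vset hn0 (Int.fract_nonneg a) (Int.fract_lt_one a) (Int.fract_nonneg c)
      (Int.fract_lt_one c)
  have htheta (a c : ℝ) : Lam n (Int.fract a) (Int.fract c) =
      theta n (Lam n (Int.fract (a + betaStar n)) (Int.fract c))
        (Lam n (Int.fract (c + betaStar n)) (Int.fract a)) := by
    rw [Lam_eq_theta hn0 (Int.fract_nonneg a) (Int.fract_lt_one a) (Int.fract_nonneg c)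
      (Int.fract_lt_one c), fract_fract_add, fract_fract_add]
  refine ⟨rfl, ⟨hmem x y, hmem y x, hmem _ y, hmem _ x⟩, _, _, hmem _ y, hmem _ x,
    htheta x y ▸ hmem x y, htheta y x ▸ hmem y x,
    Prod.ext (htheta x y) (Prod.ext (htheta y x) rfl)⟩

end MetallicMean
end

section
/- Let n ≥ 1 be an integer and d = (0,−1,1). For every (x,y) ∈ [0,1)², the averages of inner products of d/n with the top labels along the row through the origin of the configuration c_(x,y) converge to y: lim_{k→∞} (1/(2k+1)) · Σ_{i=−k}^{k} ⟨(1/n)d, Λ_n({y}, {x + iβ⁻¹})⟩ = y. -/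
open scoped BigOperators

/-!
Since `β = n + β⁻¹`, the last two coordinates of `Λ_n(y, ·)` differ by `⌊ny⌋` plus the indicator
that the point `c + iβ⁻¹` of the rotation by the irrational number `β⁻¹` lies, mod 1, in an arc of
length `{ny}`. The frequency of these visits tends to `{ny}`: every cell `[s/(M+1), (s+1)/(M+1))`
lies in the translate of any cell `[r/M, (r+1)/M)` by a point of the dense orbit `ℤβ⁻¹ + ℤ`, so
each cell of mesh `1/M` receives at least a `1/(M+1)` share of the visits up to a bounded error;
an arc of length `ℓ` contains `⌊ℓM⌋` such cells, and its complement gives the upper bound.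
Hence the averages tend to `(⌊ny⌋ + {ny}) / n = y`.
-/

open Finset Filter Topology

theorem exists_int_mul_add_int_mem_Ioo {α : ℝ} (hα : Irrational α) {u v : ℝ} (huv : u < v) :
    ∃ j m : ℤ, u < j * α + m ∧ j * α + m < v := by
  have hdense : Dense (AddSubgroup.closure {α, 1} : Set ℝ) :=
    dense_addSubgroupClosure_pair_iff.2 (by simpa using hα)
  obtain ⟨w, hw, huw, hwv⟩ := hdense.exists_between huv
  obtain ⟨j, m, rfl⟩ := AddSubgroup.mem_closure_pair.1 hw
  exact ⟨j, m, by simpa using huw, by simpa using hwv⟩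

section

variable {R : Type*} [CommRing R] [LinearOrder R] [IsStrictOrderedRing R] [FloorRing R]

theorem Int.floor_add_sub_floor (a s : R) : ⌊a + s⌋ - ⌊s⌋ = ⌊a⌋ + ⌊Int.fract a + Int.fract s⌋ := by
  have : a + s = Int.fract a + Int.fract s + ((⌊a⌋ + ⌊s⌋ : ℤ) : R) := by
    rw [Int.fract, Int.fract]; push_cast; abel
  rw [this, Int.floor_add_intCast]
  ring

theorem Int.floor_fract_add_fract (a s : R) :
    ⌊Int.fract a + Int.fract s⌋ = if 1 - Int.fract a ≤ Int.fract s then 1 else 0 := by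
  have := Int.fract_nonneg a; have := Int.fract_lt_one a
  have := Int.fract_nonneg s; have := Int.fract_lt_one s
  split_ifs with h <;> refine Int.floor_eq_iff.2 ⟨?_, ?_⟩ <;> push_cast <;> linarith

theorem Int.fract_sub_lt_one_sub_iff {ℓ : R} (hℓ₀ : 0 ≤ ℓ) (hℓ₁ : ℓ ≤ 1) (t : R) :
    Int.fract (t - ℓ) < 1 - ℓ ↔ ℓ ≤ Int.fract t := by
  have h₀ := Int.fract_nonneg t
  have h₁ := Int.fract_lt_one t
  by_cases h : ℓ ≤ Int.fract t
  · have : Int.fract (t - ℓ) = Int.fract t - ℓ :=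
      Int.fract_eq_iff.2 ⟨by linarith, by linarith, ⌊t⌋, by rw [← Int.self_sub_fract]; ring⟩
    simp only [this, h, iff_true]; linarith
  · have : Int.fract (t - ℓ) = Int.fract t - ℓ + 1 :=
      Int.fract_eq_iff.2 ⟨by linarith, by linarith, ⌊t⌋ - 1, by
        push_cast; rw [← Int.self_sub_fract]; ring⟩
    simp only [this, h, iff_false]; linarith

end

theorem Int.card_Icc_neg_self (k : ℕ) : #(Icc (-k : ℤ) k) = 2 * k + 1 := by
  rw [Int.card_Icc]; omega

theorem Int.card_filter_Icc_add_le (P : ℤ → Prop) [DecidablePred P] (k : ℕ) (j : ℤ) :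
    #{i ∈ Icc (-k : ℤ) k | P (i + j)} ≤ #{i ∈ Icc (-k : ℤ) k | P i} + 2 * j.natAbs := by
  set K : ℕ := k + j.natAbs
  have hsub : Icc (-k : ℤ) k ⊆ Icc (-K : ℤ) K := Icc_subset_Icc (by omega) (by omega)
  calc #{i ∈ Icc (-k : ℤ) k | P (i + j)}
      ≤ #{i ∈ Icc (-K : ℤ) K | P i} := by
        refine card_le_card_of_injOn (· + j) (fun i hi => ?_) (fun _ _ _ _ h => add_right_cancel h)
        simp only [coe_filter, Set.mem_ofPred_eq, mem_Icc] at hi ⊢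
        exact ⟨⟨by omega, by omega⟩, hi.2⟩
    _ ≤ #{i ∈ Icc (-k : ℤ) k | P i} + #(Icc (-K : ℤ) K \ Icc (-k : ℤ) k) := by
        refine (card_le_card fun i hi => ?_).trans (card_union_le _ _)
        by_cases hik : i ∈ Icc (-k : ℤ) k
        · exact mem_union_left _ (mem_filter.2 ⟨hik, (mem_filter.1 hi).2⟩)
        · exact mem_union_right _ (mem_sdiff.2 ⟨(mem_filter.1 hi).1, hik⟩)
    _ = #{i ∈ Icc (-k : ℤ) k | P i} + 2 * j.natAbs := by
        rw [card_sdiff_of_subset hsub, Int.card_Icc_neg_self, Int.card_Icc_neg_self]; omega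

namespace IrrationalRotation

variable (α c : ℝ)

noncomputable def visits (ℓ : ℝ) (k : ℕ) : ℕ :=
  #{i ∈ Icc (-k : ℤ) k | Int.fract (c + ((i : ℤ) : ℝ) * α) < ℓ}

/-- Visits of `c + iα` to the cell `[r/M, (r+1)/M)` of the circle. -/
noncomputable def cellVisits (M r k : ℕ) : ℕ :=
  #{i ∈ Icc (-k : ℤ) k | ⌊Int.fract (c + ((i : ℤ) : ℝ) * α) * M⌋₊ = r}

theorem sum_range_cellVisits (M p k : ℕ) :
    ∑ r ∈ range p, cellVisits α c M r k =
      #{i ∈ Icc (-k : ℤ) k | ⌊Int.fract (c + ((i : ℤ) : ℝ) * α) * M⌋₊ < p} := by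
  rw [card_eq_sum_card_fiberwise (f := fun i : ℤ => ⌊Int.fract (c + ((i : ℤ) : ℝ) * α) * M⌋₊)
    (t := range p) fun i hi => by simpa using (mem_filter.1 hi).2]
  refine sum_congr rfl fun r hr => ?_
  rw [cellVisits, filter_filter]
  congr 1
  exact filter_congr fun i _ => ⟨fun h => ⟨h ▸ mem_range.1 hr, h⟩, fun h => h.2⟩

theorem sum_cellVisits (M k : ℕ) (hM : 0 < M) :
    ∑ r ∈ range M, cellVisits α c M r k = 2 * k + 1 := by
  rw [sum_range_cellVisits, filter_true_of_mem, Int.card_Icc_neg_self]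
  intro i _
  rw [Nat.floor_lt (by positivity)]
  exact mul_lt_of_lt_one_left (by exact_mod_cast hM) (Int.fract_lt_one _)

theorem sum_cellVisits_le_visits (M k : ℕ) (ℓ : ℝ) :
    ∑ r ∈ range ⌊ℓ * M⌋₊, cellVisits α c M r k ≤ visits α c ℓ k := by
  rw [sum_range_cellVisits]
  refine card_le_card fun i hi => ?_
  rw [mem_filter] at hi ⊢
  refine ⟨hi.1, lt_of_not_ge fun h => hi.2.not_ge ?_⟩
  exact Nat.floor_le_floor (mul_le_mul_of_nonneg_right h M.cast_nonneg)

variable {α}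

theorem exists_cellVisits_succ_le (hα : Irrational α) {M r s : ℕ} (hr : r < M) :
    ∃ j : ℤ, ∀ k, cellVisits α c (M + 1) s k ≤ cellVisits α c M r k + 2 * j.natAbs := by
  have hM : (0 : ℝ) < M := by exact_mod_cast (Nat.zero_lt_of_lt hr)
  have hgap : (r : ℝ) / M - s / (M + 1) < (r + 1) / M - (s + 1) / (M + 1) := by
    rw [← sub_pos]; field_simp; ring_nf; positivity
  obtain ⟨j, m, hv₁, hv₂⟩ := exists_int_mul_add_int_mem_Ioo hα hgap
  refine ⟨j, fun k => (card_le_card fun i hi => ?_).trans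
    (Int.card_filter_Icc_add_le (fun i : ℤ => ⌊Int.fract (c + (i : ℝ) * α) * M⌋₊ = r) k j)⟩
  rw [mem_filter] at hi ⊢
  refine ⟨hi.1, ?_⟩
  set u := Int.fract (c + (i : ℝ) * α)
  obtain ⟨hu₁, hu₂⟩ := (Nat.floor_eq_iff (by positivity)).1 hi.2
  push_cast at hu₁ hu₂
  have hu₁' : (s : ℝ) / (M + 1) ≤ u := by rw [div_le_iff₀ (by positivity)]; exact hu₁
  have hu₂' : u < (s + 1) / (M + 1) := by rw [lt_div_iff₀ (by positivity)]; exact hu₂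
  have hlo : (r : ℝ) / M ≤ u + (j * α + m) := by linarith
  have hhi : u + (j * α + m) < (r + 1) / M := by linarith
  have hfract : Int.fract (c + ((i + j : ℤ) : ℝ) * α) = u + (j * α + m) := by
    refine Int.fract_eq_iff.2 ⟨le_trans (by positivity) hlo, hhi.trans_le ?_, ⌊c + i * α⌋ - m, ?_⟩
    · rw [div_le_one hM]; exact_mod_cast hr
    · push_cast; linarith [Int.floor_add_fract (c + (i : ℝ) * α)]
  rw [hfract, Nat.floor_eq_iff (le_trans (by positivity) (mul_le_mul_of_nonneg_right hlo hM.le))]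
  constructor
  · rwa [← div_le_iff₀ hM]
  · rwa [← lt_div_iff₀ hM]

theorem exists_le_cellVisits (hα : Irrational α) {M r : ℕ} (hr : r < M) :
    ∃ J : ℕ, ∀ k, 2 * k + 1 ≤ (M + 1) * cellVisits α c M r k + J := by
  choose j hj using fun s : ℕ => exists_cellVisits_succ_le c hα (s := s) hr
  refine ⟨∑ s ∈ range (M + 1), 2 * (j s).natAbs, fun k => ?_⟩
  calc 2 * k + 1 = ∑ s ∈ range (M + 1), cellVisits α c (M + 1) s k :=
        (sum_cellVisits α c (M + 1) k M.succ_pos).symm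
    _ ≤ ∑ s ∈ range (M + 1), (cellVisits α c M r k + 2 * (j s).natAbs) :=
        sum_le_sum fun s _ => hj s k
    _ = (M + 1) * cellVisits α c M r k + ∑ s ∈ range (M + 1), 2 * (j s).natAbs := by
        rw [sum_add_distrib, sum_const, card_range, smul_eq_mul]

theorem eventually_lt_visits (hα : Irrational α) {ℓ b : ℝ} (hℓ : ℓ ≤ 1) (hb : b < ℓ) :
    ∀ᶠ k : ℕ in atTop, b * (2 * k + 1) < visits α c ℓ k := by
  obtain ⟨M, hM⟩ := exists_nat_gt ((ℓ + 1) / (ℓ - b))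
  rw [div_lt_iff₀ (sub_pos.2 hb)] at hM
  set p := ⌊ℓ * M⌋₊
  have hpM : p ≤ M := Nat.floor_le_of_le (mul_le_of_le_one_left M.cast_nonneg hℓ)
  have hmargin : 0 < p - b * (M + 1) := by
    have := Nat.lt_floor_add_one (ℓ * M)
    nlinarith
  choose! J hJ using fun r (hr : r ∈ range p) =>
    exists_le_cellVisits c hα ((mem_range.1 hr).trans_le hpM)
  set C := ∑ r ∈ range p, J r
  have hcount : ∀ k, p * (2 * k + 1) ≤ (M + 1) * visits α c ℓ k + C := by
    intro k
    calc p * (2 * k + 1) = ∑ r ∈ range p, (2 * k + 1) := by rw [sum_const, card_range, smul_eq_mul]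
      _ ≤ ∑ r ∈ range p, ((M + 1) * cellVisits α c M r k + J r) :=
          sum_le_sum fun r hr => hJ r hr k
      _ ≤ (M + 1) * visits α c ℓ k + C := by
          rw [sum_add_distrib, ← mul_sum]
          gcongr
          exact sum_cellVisits_le_visits α c M k ℓ
  filter_upwards [tendsto_natCast_atTop_atTop.eventually_gt_atTop
    ((C : ℝ) / (p - b * (M + 1)))] with k hk
  rw [div_lt_iff₀ hmargin] at hk
  have hk' : ((p * (2 * k + 1) : ℕ) : ℝ) ≤ ((M + 1) * visits α c ℓ k + C : ℕ) :=
    Nat.cast_le.2 (hcount k)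
  push_cast at hk'
  have hk₂ : (k : ℝ) * (p - b * (M + 1)) ≤ (2 * k + 1) * (p - b * (M + 1)) := by
    nlinarith [k.cast_nonneg (α := ℝ)]
  refine lt_of_mul_lt_mul_left (a := (M : ℝ) + 1) ?_ (by positivity)
  linarith

theorem visits_add_visits_sub {ℓ : ℝ} (hℓ₀ : 0 ≤ ℓ) (hℓ₁ : ℓ ≤ 1) (k : ℕ) :
    visits α c ℓ k + visits α (c - ℓ) (1 - ℓ) k = 2 * k + 1 := by
  rw [visits, visits, ← Int.card_Icc_neg_self k,
    ← card_filter_add_card_filter_not (s := Icc (-k : ℤ) k)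
      (fun i : ℤ => Int.fract (c + (i : ℝ) * α) < ℓ)]
  congr 1
  refine congrArg card (filter_congr fun i _ => ?_)
  rw [show c - ℓ + (i : ℝ) * α = c + i * α - ℓ by ring, Int.fract_sub_lt_one_sub_iff hℓ₀ hℓ₁, not_lt]

theorem tendsto_visits_div (hα : Irrational α) {ℓ : ℝ} (hℓ₀ : 0 ≤ ℓ) (hℓ₁ : ℓ ≤ 1) :
    Tendsto (fun k : ℕ => (visits α c ℓ k : ℝ) / (2 * k + 1)) atTop (𝓝 ℓ) := by
  refine tendsto_order.2 ⟨fun b hb => ?_, fun b hb => ?_⟩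
  · filter_upwards [eventually_lt_visits c hα hℓ₁ hb] with k hk
    rwa [lt_div_iff₀ (by positivity)]
  · filter_upwards [eventually_lt_visits (c - ℓ) hα (by linarith : 1 - ℓ ≤ 1)
      (by linarith : 1 - b < 1 - ℓ)] with k hk
    have hsum : (visits α c ℓ k : ℝ) + visits α (c - ℓ) (1 - ℓ) k = 2 * k + 1 := by
      exact_mod_cast visits_add_visits_sub c hℓ₀ hℓ₁ k
    rw [div_lt_iff₀ (by positivity)]
    linarith

end IrrationalRotation

namespace MetallicMean

open IrrationalRotation

theorem beta_mul_beta_sub (n : ℤ) : beta n * (beta n - n) = 1 := by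
  have := Real.sq_sqrt (by positivity : (0 : ℝ) ≤ (n : ℝ) ^ 2 + 4)
  rw [beta]
  linear_combination this / 4

theorem inv_beta (n : ℤ) : (beta n)⁻¹ = beta n - n :=
  inv_eq_of_mul_eq_one_right (beta_mul_beta_sub n)

theorem not_isSquare_sq_add_four {n : ℤ} (hn : n ≠ 0) : ¬IsSquare (n ^ 2 + 4) := by
  rintro ⟨m, hm⟩
  have hn₀ : 0 < |n| := abs_pos.2 hn
  have h₁ : |n| < |m| := sq_lt_sq.1 (by nlinarith)
  have h₂ : |m| < |n| + 2 := by
    refine (pow_lt_pow_iff_left₀ (abs_nonneg m) (by positivity) two_ne_zero).1 ?_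
    nlinarith [sq_abs m, sq_abs n]
  have h₃ : |m| = |n| + 1 := by omega
  have : 2 * |n| = 3 := by nlinarith [sq_abs m, sq_abs n]
  omega

theorem irrational_inv_beta {n : ℤ} (hn : n ≠ 0) : Irrational (beta n)⁻¹ := by
  have hsqrt : Irrational √((n : ℝ) ^ 2 + 4) := by
    have := irrational_sqrt_intCast_iff.2 ⟨not_isSquare_sq_add_four hn, by positivity⟩
    push_cast at this
    exact this
  rw [inv_beta, beta]
  exact ((hsqrt.intCast_add n).div_natCast two_ne_zero).sub_intCast n

theorem Lam_snd_snd_sub_Lam_snd_fst (n : ℤ) (X Y : ℝ) :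
    (Lam n X Y).2.2 - (Lam n X Y).2.1 =
      ⌊n * X⌋ + ⌊Int.fract (n * X) + Int.fract ((beta n)⁻¹ * X + Y + betaStar n + 1)⌋ := by
  have : beta n * X + Y + betaStar n + 1 = n * X + ((beta n)⁻¹ * X + Y + betaStar n + 1) := by
    rw [inv_beta]; ring
  simp only [Lam]
  rw [this, Int.floor_add_sub_floor]

theorem statement16_general (n : ℤ) (hn : 1 ≤ n) (x y : ℝ)
    (hy : y ∈ Set.Ico (0 : ℝ) 1) :
    Filter.Tendsto
      (fun k : ℕ =>
        (1 / (2 * (k : ℝ) + 1)) *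
          ∑ i ∈ Finset.Icc (-(k : ℤ)) (k : ℤ),
            ((((Lam n (Int.fract y) (Int.fract (x + (i : ℝ) * (beta n)⁻¹))).2.2 -
                (Lam n (Int.fract y) (Int.fract (x + (i : ℝ) * (beta n)⁻¹))).2.1 : ℤ) : ℝ) /
              (n : ℝ)))
      Filter.atTop (nhds y) := by
  set α := (beta n)⁻¹
  set r := Int.fract ((n : ℝ) * y)
  set c := α * y + x + betaStar n + 1 - (1 - r)
  have hn₀ : n ≠ 0 := by omega
  have hr₀ : 0 ≤ r := Int.fract_nonneg _
  have hr₁ : r < 1 := Int.fract_lt_one _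
  have hterm (i : ℤ) :
      (((Lam n (Int.fract y) (Int.fract (x + i * α))).2.2 -
        (Lam n (Int.fract y) (Int.fract (x + i * α))).2.1 : ℤ) : ℝ) =
        ⌊n * y⌋ + if Int.fract (c + i * α) < r then 1 else 0 := by
    set s := α * y + Int.fract (x + i * α) + betaStar n + 1
    have hcs : Int.fract (c + i * α) = Int.fract (s - (1 - r)) :=
      Int.fract_eq_fract.2 ⟨⌊x + i * α⌋, by linarith [Int.floor_add_fract (x + i * α)]⟩
    have hcond : 1 - r ≤ Int.fract s ↔ Int.fract (c + i * α) < r := by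
      rw [hcs, ← Int.fract_sub_lt_one_sub_iff (by linarith) (by linarith), sub_sub_cancel]
    rw [Lam_snd_snd_sub_Lam_snd_fst, Int.fract_eq_self.2 hy, Int.floor_fract_add_fract]
    push_cast
    exact congrArg _ (if_congr hcond rfl rfl)
  have havg (k : ℕ) :
      (1 / (2 * (k : ℝ) + 1)) * ∑ i ∈ Icc (-(k : ℤ)) (k : ℤ),
          ((((Lam n (Int.fract y) (Int.fract (x + i * α))).2.2 -
            (Lam n (Int.fract y) (Int.fract (x + i * α))).2.1 : ℤ) : ℝ) / n) =
        (⌊n * y⌋ + visits α c r k / (2 * k + 1)) / n := by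
    have hvisits : (#{i ∈ Icc (-k : ℤ) k | Int.fract (c + ((i : ℤ) : ℝ) * α) < r} : ℝ) =
        visits α c r k := rfl
    simp_rw [hterm, ← sum_div, sum_add_distrib, sum_boole, sum_const, Int.card_Icc_neg_self,
      nsmul_eq_mul, hvisits]
    push_cast
    field_simp
  refine Tendsto.congr (fun k => (havg k).symm) ?_
  convert ((tendsto_visits_div c (irrational_inv_beta hn₀) hr₀ hr₁.le).const_add
    (⌊(n : ℝ) * y⌋ : ℝ)).div_const (n : ℝ) using 2
  rw [Int.floor_add_fract]
  field_simp

/-- For every (x,y) ∈ [0,1)², the averages of the inner products of (1/n)d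
with the top labels along the row through the origin of c_(x,y) converge to y. -/
theorem statement16 (n : ℤ) (hn : 1 ≤ n) (x y : ℝ)
    (hx : x ∈ Set.Ico (0 : ℝ) 1) (hy : y ∈ Set.Ico (0 : ℝ) 1) :
    Filter.Tendsto
      (fun k : ℕ =>
        (1 / (2 * (k : ℝ) + 1)) *
          ∑ i ∈ Finset.Icc (-(k : ℤ)) (k : ℤ),
            ((((Lam n (Int.fract y) (Int.fract (x + (i : ℝ) * (beta n)⁻¹))).2.2 -
                (Lam n (Int.fract y) (Int.fract (x + (i : ℝ) * (beta n)⁻¹))).2.1 : ℤ) : ℝ) /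
              (n : ℝ)))
      Filter.atTop (nhds y) :=
  statement16_general n hn x y hy

end MetallicMean
end
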